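/- Let J = [0,∞) and let f : J → ℝ be differentiable on the interior of J with f' integrable on [u,v], where u, v ∈ J and 0 < u < v. Let q > 1 and p satisfy 1/p + 1/q = 1, and let s ∈ (0,1]. If |f'|^q is s-concave in the second sense on [u,v], then |(v·f(v) - u·f(u))/(2(v-u)) + (1/2)·f((u+v)/2) - (1/(v-u))·∫_u^v f(μ) dμ| ≤ (2^{(s-1)/q}·L_p(u,v)/4)·[|f'((u+3v)/4)| + |f'((3u+v)/4)|]. -/

import Mathlib

/-!
Integrating by parts against the kernel `x ↦ 2 (x - a) + u` on each half `[a, b]` of `[u, v]`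
(it runs from `u` to `v` across the half) turns the left-hand side into the sum of
`∫ (2 (x - a) + u) f' x` over the two halves, divided by `2 (v - u)`. On each half, Hölder's
inequality splits this into `(∫ kernel ^ p) ^ (1 / p)`, an explicit generalized logarithmic
mean, times `(∫ |f'| ^ q) ^ (1 / q)`, and the left Hermite–Hadamard inequality for the
`s`-concave function `|f'| ^ q` bounds the latter by its value at the midpoint of the half.
-/

open MeasureTheory Set intervalIntegral

/-- `s`-concavity in the second sense (Breckner). -/
def SConcaveOn (s : ℝ) (I : Set ℝ) (g : ℝ → ℝ) : Prop :=
  ∀ x ∈ I, ∀ y ∈ I, ∀ t ∈ Icc (0 : ℝ) 1,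
    t ^ s * g x + (1 - t) ^ s * g y ≤ g (t * x + (1 - t) * y)

namespace SConcaveOn

variable {s a b : ℝ} {g : ℝ → ℝ}

theorem mono {I J : Set ℝ} (h : SConcaveOn s I g) (hJI : J ⊆ I) : SConcaveOn s J g :=
  fun x hx y hy t ht => h x (hJI hx) y (hJI hy) t ht

theorem add_comp_reflect_le (h : SConcaveOn s (Icc a b) g) {x : ℝ} (hx : x ∈ Icc a b) :
    g x + g (a + b - x) ≤ 2 ^ s * g ((a + b) / 2) := by
  have hx' : a + b - x ∈ Icc a b := ⟨by linarith [hx.2], by linarith [hx.1]⟩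
  have key := h x hx (a + b - x) hx' (1 / 2) ⟨by norm_num, by norm_num⟩
  rwa [show (1 : ℝ) - 1 / 2 = 1 / 2 by norm_num, ← mul_add,
    show (1 : ℝ) / 2 * x + 1 / 2 * (a + b - x) = (a + b) / 2 by ring, one_div,
    Real.inv_rpow zero_le_two, inv_mul_le_iff₀ (by positivity)] at key

theorem le_two_rpow_mul (h : SConcaveOn s (Icc a b) g) (hg : ∀ x ∈ Icc a b, 0 ≤ g x) {x : ℝ}
    (hx : x ∈ Icc a b) : g x ≤ 2 ^ s * g ((a + b) / 2) :=
  (le_add_of_nonneg_right (hg _ ⟨by linarith [hx.2], by linarith [hx.1]⟩)).trans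
    (h.add_comp_reflect_le hx)

/-- The left Hermite–Hadamard inequality. -/
theorem integral_le (h : SConcaveOn s (Icc a b) g) (hab : a ≤ b)
    (hg : IntervalIntegrable g volume a b) :
    ∫ x in a..b, g x ≤ 2 ^ (s - 1) * (b - a) * g ((a + b) / 2) := by
  have hg' : IntervalIntegrable (fun x => g (a + b - x)) volume a b := by
    have := (hg.comp_sub_left (a + b)).symm
    rwa [add_sub_cancel_left, add_sub_cancel_right] at this
  have hreflect : ∫ x in a..b, g (a + b - x) = ∫ x in a..b, g x := by
    rw [integral_comp_sub_left g, add_sub_cancel_left, add_sub_cancel_right]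
  have hsum : ∫ x in a..b, (g x + g (a + b - x)) ≤ ∫ _ in a..b, 2 ^ s * g ((a + b) / 2) :=
    integral_mono_on hab (hg.add hg') intervalIntegrable_const fun x hx =>
      h.add_comp_reflect_le hx
  rw [integral_add hg hg', hreflect, intervalIntegral.integral_const, smul_eq_mul] at hsum
  rw [Real.rpow_sub_one two_ne_zero]
  linarith

end SConcaveOn

theorem memLp_restrict_Ioc_of_abs_le {F : ℝ → ℝ} {a b C : ℝ} {p : ENNReal}
    (hF : AEStronglyMeasurable F (volume.restrict (Ioc a b)))
    (hC : ∀ x ∈ Ioc a b, |F x| ≤ C) :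
    MemLp F p (volume.restrict (Ioc a b)) :=
  MemLp.of_bound hF C <| (ae_restrict_iff' measurableSet_Ioc).2 <| ae_of_all _ hC

theorem abs_integral_mul_le_of_sConcaveOn {F g : ℝ → ℝ} {a b p q s : ℝ}
    (hpq : p.HolderConjugate q) (hab : a ≤ b) (hF0 : ∀ x ∈ Icc a b, 0 ≤ F x)
    (hF : ContinuousOn F (Icc a b)) (hg : IntervalIntegrable g volume a b)
    (hconc : SConcaveOn s (Icc a b) fun x => |g x| ^ q) :
    |∫ x in a..b, F x * g x| ≤
      (∫ x in a..b, F x ^ p) ^ (1 / p)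
        * ((2 ^ (s - 1) * (b - a)) ^ (1 / q) * |g ((a + b) / 2)|) := by
  have hq := hpq.symm.pos
  set c := (a + b) / 2
  have hg_le : ∀ x ∈ Icc a b, |g x| ≤ (2 ^ s * |g c| ^ q) ^ (1 / q) := fun x hx => by
    refine (Real.rpow_le_rpow_iff (abs_nonneg _) (by positivity) hq).1 ?_
    rw [← Real.rpow_mul (by positivity), one_div_mul_cancel hq.ne', Real.rpow_one]
    exact hconc.le_two_rpow_mul (fun _ _ => by positivity) hx
  obtain ⟨C, hC⟩ := isCompact_Icc.exists_bound_of_continuousOn hF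
  have hFLp : MemLp F (ENNReal.ofReal p) (volume.restrict (Ioc a b)) :=
    memLp_restrict_Ioc_of_abs_le ((hF.mono Ioc_subset_Icc_self).aestronglyMeasurable
      measurableSet_Ioc) fun x hx => hC x (Ioc_subset_Icc_self hx)
  have hgLp : MemLp (fun x => |g x|) (ENNReal.ofReal q) (volume.restrict (Ioc a b)) :=
    memLp_restrict_Ioc_of_abs_le hg.1.aestronglyMeasurable.norm fun x hx => by
      rw [abs_abs]; exact hg_le x (Ioc_subset_Icc_self hx)
  have hgq : IntervalIntegrable (fun x => |g x| ^ q) volume a b := by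
    have := hgLp.integrable_norm_rpow'
    rw [ENNReal.toReal_ofReal hq.le] at this
    simpa only [Real.norm_eq_abs, abs_abs, intervalIntegrable_iff_integrableOn_Ioc_of_le hab]
  have holder := integral_mul_le_Lp_mul_Lq_of_nonneg hpq
    ((ae_restrict_iff' measurableSet_Ioc).2 <|
      ae_of_all _ fun x hx => hF0 x (Ioc_subset_Icc_self hx))
    (ae_of_all _ fun x => abs_nonneg (g x)) hFLp hgLp
  have hHH :
      (∫ x in a..b, |g x| ^ q) ^ (1 / q) ≤ (2 ^ (s - 1) * (b - a)) ^ (1 / q) * |g c| := by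
    calc (∫ x in a..b, |g x| ^ q) ^ (1 / q)
        ≤ (2 ^ (s - 1) * (b - a) * |g c| ^ q) ^ (1 / q) :=
          Real.rpow_le_rpow (integral_nonneg hab fun _ _ => by positivity)
            (hconc.integral_le hab hgq) hpq.symm.one_div_nonneg
      _ = (2 ^ (s - 1) * (b - a)) ^ (1 / q) * |g c| := by
          rw [Real.mul_rpow (mul_nonneg (by positivity) (sub_nonneg.2 hab)) (by positivity),
            ← Real.rpow_mul (abs_nonneg _), mul_one_div_cancel hq.ne', Real.rpow_one]
  calc |∫ x in a..b, F x * g x| ≤ ∫ x in a..b, F x * |g x| := by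
        refine (abs_integral_le_integral_abs hab).trans_eq (integral_congr fun x hx => ?_)
        rw [uIcc_of_le hab] at hx
        simp only [abs_mul, abs_of_nonneg (hF0 x hx)]
    _ ≤ (∫ x in a..b, F x ^ p) ^ (1 / p) * (∫ x in a..b, |g x| ^ q) ^ (1 / q) := by
        simpa only [integral_of_le hab] using holder
    _ ≤ _ := mul_le_mul_of_nonneg_left hHH <| Real.rpow_nonneg
        (integral_nonneg hab fun x hx => Real.rpow_nonneg (hF0 x hx) p) _

theorem integral_affine_rpow {a b c d r : ℝ} (hc : c ≠ 0) (hr : -1 < r) :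
    ∫ x in a..b, (c * (x - a) + d) ^ r
      = ((c * (b - a) + d) ^ (r + 1) - d ^ (r + 1)) / (c * (r + 1)) := by
  have hsub := integral_comp_mul_add (a := a) (b := b) (fun y => y ^ r) hc (d - c * a)
  simp only [integral_rpow (Or.inl hr), smul_eq_mul] at hsub
  rw [show c * a + (d - c * a) = d by ring, show c * b + (d - c * a) = c * (b - a) + d by ring,
    inv_mul_eq_div, div_div] at hsub
  rw [mul_comm c (r + 1), ← hsub]
  congr 1 with x
  ring_nf

theorem integral_affine_mul_deriv {f f' : ℝ → ℝ} {a b c d : ℝ}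
    (hf : ∀ x ∈ uIcc a b, HasDerivAt f (f' x) x) (hf' : IntervalIntegrable f' volume a b) :
    ∫ x in a..b, (c * (x - a) + d) * f' x
      = (c * (b - a) + d) * f b - d * f a - c * ∫ x in a..b, f x := by
  have hw : ∀ x ∈ uIcc a b, HasDerivAt (fun x => c * (x - a) + d) c x := fun x _ => by
    simpa using (((hasDerivAt_id x).sub_const a).const_mul c).add_const d
  rw [integral_mul_deriv_eq_deriv_mul hw hf intervalIntegrable_const hf',
    intervalIntegral.integral_const_mul]
  ring

theorem trapezoid_add_midpoint_sub_integral_eq {f f' : ℝ → ℝ} {u v : ℝ} (huv : u < v)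
    (hf : ∀ x ∈ Icc u v, HasDerivAt f (f' x) x) (hf' : IntervalIntegrable f' volume u v) :
    (v * f v - u * f u) / (2 * (v - u)) + 1 / 2 * f ((u + v) / 2) - 1 / (v - u) * ∫ x in u..v, f x
      = ((∫ x in u..(u + v) / 2, (2 * (x - u) + u) * f' x)
          + ∫ x in (u + v) / 2..v, (2 * (x - (u + v) / 2) + u) * f' x) / (2 * (v - u)) := by
  have hm : (u + v) / 2 ∈ uIcc u v := by rw [uIcc_of_le huv.le]; constructor <;> linarith
  have hf_uIcc : ∀ x ∈ uIcc u v, HasDerivAt f (f' x) x := by rwa [uIcc_of_le huv.le]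
  have hcont : ContinuousOn f (uIcc u v) := fun x hx =>
    (hf_uIcc x hx).continuousAt.continuousWithinAt
  rw [integral_affine_mul_deriv (fun x hx => hf_uIcc x (uIcc_subset_uIcc_left hm hx))
      (hf'.mono_set (uIcc_subset_uIcc_left hm)),
    integral_affine_mul_deriv (fun x hx => hf_uIcc x (uIcc_subset_uIcc_right hm hx))
      (hf'.mono_set (uIcc_subset_uIcc_right hm)),
    ← integral_add_adjacent_intervals (hcont.mono (uIcc_subset_uIcc_left hm)).intervalIntegrable
      (hcont.mono (uIcc_subset_uIcc_right hm)).intervalIntegrable]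
  have hvu : v - u ≠ 0 := by linarith
  field_simp
  ring

theorem abs_integral_affine_mul_le_of_sConcaveOn {f' : ℝ → ℝ} {u v a b p q s : ℝ}
    (hpq : p.HolderConjugate q) (hu : 0 < u) (hab : a ≤ b) (hv : 2 * (b - a) + u = v)
    (hf' : IntervalIntegrable f' volume a b)
    (hconc : SConcaveOn s (Icc a b) fun x => |f' x| ^ q) :
    |∫ x in a..b, (2 * (x - a) + u) * f' x| ≤
      2 ^ ((s - 1) / q) * ((v ^ (p + 1) - u ^ (p + 1)) / ((p + 1) * (v - u))) ^ (1 / p)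
        * (b - a) * |f' ((a + b) / 2)| := by
  have hp := hpq.pos
  set L := (v ^ (p + 1) - u ^ (p + 1)) / ((p + 1) * (v - u))
  have hL : 0 ≤ L := div_nonneg
    (sub_nonneg.2 (Real.rpow_le_rpow hu.le (by linarith) (by linarith))) (by nlinarith)
  have hweight : ∫ x in a..b, (2 * (x - a) + u) ^ p = L * (b - a) := by
    rw [integral_affine_rpow two_ne_zero (by linarith), hv]
    rcases hab.eq_or_lt with rfl | hab
    · simp [show v = u by linarith]
    · simp only [L, show v - u = 2 * (b - a) by linarith]
      field_simp
  have hbound := abs_integral_mul_le_of_sConcaveOn hpq hab (fun x hx => by linarith [hx.1])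
    (by fun_prop : Continuous fun x => 2 * (x - a) + u).continuousOn hf' hconc
  have hba : 0 ≤ b - a := sub_nonneg.2 hab
  calc _ ≤ _ := hbound
    _ = L ^ (1 / p) * (2 ^ (s - 1)) ^ (1 / q) * (b - a) ^ (1 / p + 1 / q) * |f' ((a + b) / 2)| := by
        rw [hweight, Real.mul_rpow hL hba, Real.mul_rpow (by positivity) hba,
          Real.rpow_add' hba (by rw [hpq.one_div_add_one_div]; norm_num)]
        ring
    _ = _ := by
        rw [hpq.one_div_add_one_div, div_one, Real.rpow_one, ← Real.rpow_mul zero_le_two,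
          mul_one_div]
        ring

theorem stmt_18_general (f f' : ℝ → ℝ) (u v p q s : ℝ) (hu : 0 < u) (huv : u < v)
    (hq : 1 < q) (hpq : 1 / p + 1 / q = 1)
    (hderiv : ∀ y ∈ interior (Set.Ici (0:ℝ)), HasDerivAt f (f' y) y)
    (hint : IntervalIntegrable f' MeasureTheory.volume u v)
    (hsconc : ∀ a ∈ Set.Icc u v, ∀ b ∈ Set.Icc u v, ∀ t ∈ Set.Icc (0:ℝ) 1,
      t ^ s * |f' a| ^ q + (1 - t) ^ s * |f' b| ^ q ≤ |f' (t * a + (1 - t) * b)| ^ q) :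
    |(v * f v - u * f u) / (2 * (v - u)) + (1 / 2) * f ((u + v) / 2)
        - (1 / (v - u)) * ∫ μ in u..v, f μ|
      ≤ ((2:ℝ) ^ ((s - 1) / q) *
            ((v ^ (p + 1) - u ^ (p + 1)) / ((p + 1) * (v - u))) ^ (1 / p) / 4) *
          (|f' ((u + 3 * v) / 4)| + |f' ((3 * u + v) / 4)|) := by
  have hpq' : p.HolderConjugate q :=
    (Real.holderConjugate_iff.2 ⟨hq, by simpa only [one_div, add_comm] using hpq⟩).symm
  have hf : ∀ x ∈ Icc u v, HasDerivAt f (f' x) x := fun x hx =>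
    hderiv x (by rw [interior_Ici]; exact hu.trans_le hx.1)
  have hconc : SConcaveOn s (Icc u v) fun x => |f' x| ^ q := hsconc
  have hm : (u + v) / 2 ∈ Icc u v := ⟨by linarith, by linarith⟩
  have h₁ := abs_integral_affine_mul_le_of_sConcaveOn (v := v) hpq' hu hm.1 (by ring)
    (hint.mono_set (uIcc_subset_uIcc_left (Icc_subset_uIcc hm)))
    (hconc.mono (Icc_subset_Icc_right hm.2))
  have h₂ := abs_integral_affine_mul_le_of_sConcaveOn (v := v) hpq' hu hm.2 (by ring)
    (hint.mono_set (uIcc_subset_uIcc_right (Icc_subset_uIcc hm)))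
    (hconc.mono (Icc_subset_Icc_left hm.1))
  rw [show (u + (u + v) / 2) / 2 = (3 * u + v) / 4 by ring] at h₁
  rw [show ((u + v) / 2 + v) / 2 = (u + 3 * v) / 4 by ring] at h₂
  rw [trapezoid_add_midpoint_sub_integral_eq huv hf hint, abs_div,
    abs_of_pos (by linarith : (0 : ℝ) < 2 * (v - u))]
  calc _ ≤ (_ + _) / (2 * (v - u)) := by
        gcongr
        exact (abs_add_le _ _).trans (add_le_add h₁ h₂)
    _ = _ := by
        have hvu : v - u ≠ 0 := by linarith
        field_simp
        ring

theorem stmt_18 (f f' : ℝ → ℝ) (u v p q s : ℝ) (hu : 0 < u) (huv : u < v)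
    (hq : 1 < q) (hpq : 1 / p + 1 / q = 1) (hs0 : 0 < s) (hs1 : s ≤ 1)
    (hderiv : ∀ y ∈ interior (Set.Ici (0:ℝ)), HasDerivAt f (f' y) y)
    (hint : IntervalIntegrable f' MeasureTheory.volume u v)
    (hsconc : ∀ a ∈ Set.Icc u v, ∀ b ∈ Set.Icc u v, ∀ t ∈ Set.Icc (0:ℝ) 1,
      t ^ s * |f' a| ^ q + (1 - t) ^ s * |f' b| ^ q ≤ |f' (t * a + (1 - t) * b)| ^ q) :
    |(v * f v - u * f u) / (2 * (v - u)) + (1 / 2) * f ((u + v) / 2)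
        - (1 / (v - u)) * ∫ μ in u..v, f μ|
      ≤ ((2:ℝ) ^ ((s - 1) / q) *
            ((v ^ (p + 1) - u ^ (p + 1)) / ((p + 1) * (v - u))) ^ (1 / p) / 4) *
          (|f' ((u + 3 * v) / 4)| + |f' ((3 * u + v) / 4)|) :=
  stmt_18_general f f' u v p q s hu huv hq hpq hderiv hint hsconc
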